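/- The function u defined by u(t,x) = −2t if x ≤ −t², u(t,x) = 2x/t if |x| < t² (t > 0), u(t,x) = 2t if x ≥ t², satisfies the energy conservation law (u_x²)_t + (u u_x²)_x = 0 in distributional sense on (0,∞) × ℝ: for every test function φ ∈ C_c^1((0,∞) × ℝ), ∫₀^∞ ∫_ℝ ( u_x(t,x)² φ_t(t,x) + u(t,x) u_x(t,x)² φ_x(t,x) ) dx dt = 0. -/

import Mathlib

open MeasureTheory

/-- The weak solution `u(t,x) = -2t` for `x ≤ -t²`, `2x/t` for `|x| < t²`, `2t` for `x ≥ t²`. -/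
noncomputable def uHS (t x : ℝ) : ℝ :=
  if x ≤ -t ^ 2 then -2 * t else if x < t ^ 2 then 2 * x / t else 2 * t

/-- Its spatial derivative: `2/t` on `(-t², t²)`, `0` outside. -/
noncomputable def uHSx (t x : ℝ) : ℝ :=
  if |x| < t ^ 2 then 2 / t else 0

/-! For `t > 0` the inner integral only sees `|x| < t²`, where `u_x = 2/t` and `u = 2x/t`.
Substituting `x = t² y` turns it into `4 G'(t)` with `G(t) = ∫_{-1}^{1} φ(t, t² y) dy`: the
rescaling factor `t²` cancels `u_x² = 4/t²`, and the flux term `u u_x² φ_x` becomes exactly the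
chain-rule term of `∂ₜ [φ(t, t² y)]`. Since `G` is `C¹` with compact support and `G(0) = 0`,
`∫₀^∞ G' = 0`. -/

open Set Function

section General

variable {E : Type*} [NormedAddCommGroup E] [NormedSpace ℝ E]

section Leibniz

variable {F F' : ℝ → ℝ → E}

theorem hasDerivAt_intervalIntegral_of_continuous_partial (hF : Continuous (uncurry F))
    (hF' : Continuous (uncurry F')) (hderiv : ∀ t y, HasDerivAt (F · y) (F' t y) t)
    (a b t : ℝ) :
    HasDerivAt (fun s => ∫ y in a..b, F s y) (∫ y in a..b, F' t y) t := by
  obtain ⟨C, hC⟩ := ((isCompact_closedBall t 1).prod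
    (isCompact_uIcc (a := a) (b := b))).exists_bound_of_continuousOn hF'.continuousOn
  have hcont : ∀ s, Continuous (F s) := fun s => hF.comp (Continuous.prodMk_right s)
  refine (intervalIntegral.hasDerivAt_integral_of_dominated_loc_of_deriv_le
    (bound := fun _ => C) (Metric.ball_mem_nhds t one_pos)
    (.of_forall fun s => (hcont s).aestronglyMeasurable) ((hcont t).intervalIntegrable _ _)
    (hF'.comp (Continuous.prodMk_right t)).aestronglyMeasurable ?_ intervalIntegrable_const
    (.of_forall fun y _ s _ => hderiv s y)).2
  refine .of_forall fun y hy s hs => hC (s, y) ⟨Metric.ball_subset_closedBall hs, ?_⟩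
  exact uIoc_subset_uIcc hy

theorem contDiff_one_intervalIntegral_of_continuous_partial (hF : Continuous (uncurry F))
    (hF' : Continuous (uncurry F')) (hderiv : ∀ t y, HasDerivAt (F · y) (F' t y) t)
    (a b : ℝ) :
    ContDiff ℝ 1 fun s => ∫ y in a..b, F s y := by
  have hG := hasDerivAt_intervalIntegral_of_continuous_partial hF hF' hderiv a b
  refine contDiff_one_iff_deriv.2 ⟨fun t => (hG t).differentiableAt, ?_⟩
  rw [show deriv _ = _ from funext fun t => (hG t).deriv]
  exact intervalIntegral.continuous_parametric_intervalIntegral_of_continuous' hF' a b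

end Leibniz

theorem HasCompactSupport.intervalIntegral_comp {X : Type*} [TopologicalSpace X] [R1Space X]
    {φ : X × ℝ → E} (hφ : HasCompactSupport φ) (g : X → ℝ → ℝ) (a b : ℝ) :
    HasCompactSupport fun t => ∫ y in a..b, φ (t, g t y) := by
  refine .intro (hφ.image continuous_fst) fun t ht => ?_
  have hzero : ∀ y, φ (t, g t y) = 0 := fun y =>
    image_eq_zero_of_notMem_tsupport fun h => ht ⟨_, h, rfl⟩
  simp [hzero]

theorem DifferentiableAt.fderiv_apply_one_eq_deriv_add_smul_deriv {φ : ℝ × ℝ → E} {t x : ℝ}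
    (hφ : DifferentiableAt ℝ φ (t, x)) (c : ℝ) :
    fderiv ℝ φ (t, x) (1, c) = deriv (fun s => φ (s, x)) t + c • deriv (fun y => φ (t, y)) x := by
  have hfst : HasDerivAt (fun s => φ (s, x)) (fderiv ℝ φ (t, x) (1, 0)) t :=
    hφ.hasFDerivAt.comp_hasDerivAt t ((hasDerivAt_id t).prodMk (hasDerivAt_const t x))
  have hsnd : HasDerivAt (fun y => φ (t, y)) (fderiv ℝ φ (t, x) (0, 1)) x :=
    hφ.hasFDerivAt.comp_hasDerivAt x ((hasDerivAt_const x t).prodMk (hasDerivAt_id x))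
  rw [hfst.deriv, hsnd.deriv, ← map_smul, ← map_add]
  congr 1
  ext <;> simp

theorem hasDerivAt_comp_parabola {φ : ℝ × ℝ → E} {t y : ℝ}
    (hφ : DifferentiableAt ℝ φ (t, t ^ 2 * y)) :
    HasDerivAt (fun s => φ (s, s ^ 2 * y)) (fderiv ℝ φ (t, t ^ 2 * y) (1, 2 * t * y)) t :=
  hφ.hasFDerivAt.comp_hasDerivAt t
    ((hasDerivAt_id t).prodMk (by simpa using (hasDerivAt_pow 2 t).mul_const y))

end General

theorem energy_integrand_eq_indicator {φ : ℝ × ℝ → ℝ} (hφ : Differentiable ℝ φ) (t x : ℝ) :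
    uHSx t x ^ 2 * deriv (fun s => φ (s, x)) t
        + uHS t x * uHSx t x ^ 2 * deriv (fun y => φ (t, y)) x
      = (Ioo (-t ^ 2) (t ^ 2)).indicator
          (fun x => (2 / t) ^ 2 * fderiv ℝ φ (t, x) (1, 2 * x / t)) x := by
  by_cases hx : |x| < t ^ 2
  · have hmem : x ∈ Ioo (-t ^ 2) (t ^ 2) := abs_lt.1 hx
    rw [indicator_of_mem hmem, (hφ _).fderiv_apply_one_eq_deriv_add_smul_deriv, uHSx, if_pos hx,
      uHS, if_neg (not_le.2 hmem.1), if_pos hmem.2, smul_eq_mul]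
    ring
  · have hmem : x ∉ Ioo (-t ^ 2) (t ^ 2) := fun h => hx (abs_lt.2 h)
    rw [indicator_of_notMem hmem, uHSx, if_neg hx]
    ring

theorem integral_energy_integrand {φ : ℝ × ℝ → ℝ} (hφ : Differentiable ℝ φ) {t : ℝ} (ht : 0 < t) :
    ∫ x, (uHSx t x ^ 2 * deriv (fun s => φ (s, x)) t
        + uHS t x * uHSx t x ^ 2 * deriv (fun y => φ (t, y)) x)
      = 4 * ∫ y in (-1)..1, fderiv ℝ φ (t, t ^ 2 * y) (1, 2 * t * y) := by
  set f := fun x => (2 / t) ^ 2 * fderiv ℝ φ (t, x) (1, 2 * x / t)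
  have hrescale : ∫ x in (-t ^ 2)..(t ^ 2), f x = t ^ 2 * ∫ y in (-1)..1, f (t ^ 2 * y) := by
    rw [← smul_eq_mul, intervalIntegral.smul_integral_comp_mul_left]
    ring_nf
  simp_rw [energy_integrand_eq_indicator hφ t]
  rw [integral_indicator measurableSet_Ioo, ← integral_Ioc_eq_integral_Ioo,
    ← intervalIntegral.integral_of_le (by linarith [sq_nonneg t]), hrescale,
    ← intervalIntegral.integral_const_mul, ← intervalIntegral.integral_const_mul]
  refine intervalIntegral.integral_congr fun y _ => ?_
  have hslope : 2 * (t ^ 2 * y) / t = 2 * t * y := by field_simp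
  simp only [f, hslope]
  field_simp
  ring

/-- The solution `uHS` satisfies the energy conservation law `(u_x²)_t + (u u_x²)_x = 0`
in distributional sense on `(0,∞) × ℝ`. -/
theorem energy_conservation_distributional :
    ∀ φ : ℝ × ℝ → ℝ, ContDiff ℝ 1 φ → HasCompactSupport φ →
      tsupport φ ⊆ Set.Ioi 0 ×ˢ Set.univ →
      (∫ t in Set.Ioi (0 : ℝ), ∫ x : ℝ,
        ((uHSx t x) ^ 2 * deriv (fun s => φ (s, x)) t
          + uHS t x * (uHSx t x) ^ 2 * deriv (fun y => φ (t, y)) x)) = 0 := by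
  intro φ hφ hφc hsupp
  have hdiff : Differentiable ℝ φ := hφ.differentiable one_ne_zero
  set G : ℝ → ℝ := fun t => ∫ y in (-1)..1, φ (t, t ^ 2 * y)
  have hcont : Continuous (uncurry fun t y => φ (t, t ^ 2 * y)) :=
    hφ.continuous.comp (by fun_prop)
  have hcont' : Continuous (uncurry fun t y => fderiv ℝ φ (t, t ^ 2 * y) (1, 2 * t * y)) :=
    ((hφ.continuous_fderiv one_ne_zero).comp (by fun_prop)).clm_apply (by fun_prop)
  have hderiv := fun t y => hasDerivAt_comp_parabola (hdiff (t, t ^ 2 * y))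
  have hG0 : G 0 = 0 := by
    have hφ0 : φ (0, 0) = 0 :=
      image_eq_zero_of_notMem_tsupport fun h => lt_irrefl (0 : ℝ) (hsupp h).1
    simp [G, hφ0]
  calc _ = ∫ t in Ioi 0, 4 * deriv G t := setIntegral_congr_fun measurableSet_Ioi fun t ht => by
          rw [integral_energy_integrand hdiff ht,
            (hasDerivAt_intervalIntegral_of_continuous_partial hcont hcont' hderiv _ _ t).deriv]
    _ = 4 * -G 0 := by
          rw [integral_const_mul, HasCompactSupport.integral_Ioi_deriv_eq
            (contDiff_one_intervalIntegral_of_continuous_partial hcont hcont' hderiv _ _)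
            (hφc.intervalIntegral_comp _ _ _)]
    _ = 0 := by rw [hG0, neg_zero, mul_zero]
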